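/- Let C be a cogroupoid and X, Y objects of C. For any algebra homomorphism ξ: C(X,X) → k, the left winding map [ξ]^l_{X,X}: C(X,X) → C(X,X) defined by a ↦ ξ(a_1)a_2 is an algebra automorphism with inverse [ξ∘S_{X,X}]^l; moreover ξ∘S²_{X,X} = ξ, and on C(X,Y) one has [ξ]^l_{X,Y} ∘ S_{Y,X} ∘ S_{X,Y} = S_{Y,X} ∘ S_{X,Y} ∘ [ξ]^l_{X,Y}, where [ξ]^l_{X,Y}(a^{X,Y}) = ξ(a_1^{X,X}) a_2^{X,Y}. -/

import Mathlib

/- STATEMENT 13: Winding automorphisms of a cogroupoid: [ξ]^l_{X,X} is an algebra automorphism with inverse [ξ∘S_{X,X}]^l, ξ∘S²_{X,X} = ξ (so [ξ]^l = [ξS²]^l), and [ξ]^l_{X,Y} commutes with S_{Y,X}∘S_{X,Y} on C(X,Y). -/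

namespace Stmt13

open TensorProduct

noncomputable section

set_option synthInstance.maxHeartbeats 1600000
set_option maxHeartbeats 3200000

variable (k : Type) [Field k]
variable (A : Type) [Ring A] [Algebra k A]
variable (B : Type) [Ring B] [Algebra k B]
variable (P : Type) [Ring P] [Algebra k P]
variable (Q : Type) [Ring Q] [Algebra k Q]

/-- The data and axioms of a (connected) cogroupoid restricted to two objects `X, Y`:
`A = C(X,X)`, `B = C(Y,Y)`, `P = C(X,Y)`, `Q = C(Y,X)`, with all comultiplications
`Δ^Z_{U,V}`, counits `ε_X, ε_Y` and antipodes `S_{U,V}` between them.  In particular `A`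
and `B` are Hopf algebras. -/
structure TwoCogroupoid where
  dA : A →ₐ[k] A ⊗[k] A          -- Δ^X_{X,X}
  dA' : A →ₐ[k] P ⊗[k] Q         -- Δ^Y_{X,X}
  dPX : P →ₐ[k] A ⊗[k] P         -- Δ^X_{X,Y}
  dPY : P →ₐ[k] P ⊗[k] B         -- Δ^Y_{X,Y}
  dQX : Q →ₐ[k] Q ⊗[k] A         -- Δ^X_{Y,X}
  dQY : Q →ₐ[k] B ⊗[k] Q         -- Δ^Y_{Y,X}
  dB : B →ₐ[k] B ⊗[k] B          -- Δ^Y_{Y,Y}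
  dB' : B →ₐ[k] Q ⊗[k] P         -- Δ^X_{Y,Y}
  eX : A →ₐ[k] k                 -- ε_X
  eY : B →ₐ[k] k                 -- ε_Y
  sA : A →ₗ[k] A                 -- S_{X,X}
  sP : P →ₗ[k] Q                 -- S_{X,Y}
  sQ : Q →ₗ[k] P                 -- S_{Y,X}
  sB : B →ₗ[k] B                 -- S_{Y,Y}
  -- coassociativity on A
  coA1 : (TensorProduct.assoc k A A A).toLinearMap ∘ₗ
      TensorProduct.map dA.toLinearMap LinearMap.id ∘ₗ dA.toLinearMap =
    TensorProduct.map LinearMap.id dA.toLinearMap ∘ₗ dA.toLinearMap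
  coA2 : (TensorProduct.assoc k P Q A).toLinearMap ∘ₗ
      TensorProduct.map dA'.toLinearMap LinearMap.id ∘ₗ dA.toLinearMap =
    TensorProduct.map LinearMap.id dQX.toLinearMap ∘ₗ dA'.toLinearMap
  coA3 : (TensorProduct.assoc k A P Q).toLinearMap ∘ₗ
      TensorProduct.map dPX.toLinearMap LinearMap.id ∘ₗ dA'.toLinearMap =
    TensorProduct.map LinearMap.id dA'.toLinearMap ∘ₗ dA.toLinearMap
  coA4 : (TensorProduct.assoc k P B Q).toLinearMap ∘ₗ
      TensorProduct.map dPY.toLinearMap LinearMap.id ∘ₗ dA'.toLinearMap =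
    TensorProduct.map LinearMap.id dQY.toLinearMap ∘ₗ dA'.toLinearMap
  -- coassociativity on P
  coP1 : (TensorProduct.assoc k A A P).toLinearMap ∘ₗ
      TensorProduct.map dA.toLinearMap LinearMap.id ∘ₗ dPX.toLinearMap =
    TensorProduct.map LinearMap.id dPX.toLinearMap ∘ₗ dPX.toLinearMap
  coP2 : (TensorProduct.assoc k P Q P).toLinearMap ∘ₗ
      TensorProduct.map dA'.toLinearMap LinearMap.id ∘ₗ dPX.toLinearMap =
    TensorProduct.map LinearMap.id dB'.toLinearMap ∘ₗ dPY.toLinearMap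
  coP3 : (TensorProduct.assoc k A P B).toLinearMap ∘ₗ
      TensorProduct.map dPX.toLinearMap LinearMap.id ∘ₗ dPY.toLinearMap =
    TensorProduct.map LinearMap.id dPY.toLinearMap ∘ₗ dPX.toLinearMap
  coP4 : (TensorProduct.assoc k P B B).toLinearMap ∘ₗ
      TensorProduct.map dPY.toLinearMap LinearMap.id ∘ₗ dPY.toLinearMap =
    TensorProduct.map LinearMap.id dB.toLinearMap ∘ₗ dPY.toLinearMap
  -- coassociativity on Q
  coQ1 : (TensorProduct.assoc k Q A A).toLinearMap ∘ₗ
      TensorProduct.map dQX.toLinearMap LinearMap.id ∘ₗ dQX.toLinearMap =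
    TensorProduct.map LinearMap.id dA.toLinearMap ∘ₗ dQX.toLinearMap
  coQ2 : (TensorProduct.assoc k B Q A).toLinearMap ∘ₗ
      TensorProduct.map dQY.toLinearMap LinearMap.id ∘ₗ dQX.toLinearMap =
    TensorProduct.map LinearMap.id dQX.toLinearMap ∘ₗ dQY.toLinearMap
  coQ3 : (TensorProduct.assoc k Q P Q).toLinearMap ∘ₗ
      TensorProduct.map dB'.toLinearMap LinearMap.id ∘ₗ dQY.toLinearMap =
    TensorProduct.map LinearMap.id dA'.toLinearMap ∘ₗ dQX.toLinearMap
  coQ4 : (TensorProduct.assoc k B B Q).toLinearMap ∘ₗ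
      TensorProduct.map dB.toLinearMap LinearMap.id ∘ₗ dQY.toLinearMap =
    TensorProduct.map LinearMap.id dQY.toLinearMap ∘ₗ dQY.toLinearMap
  -- coassociativity on B
  coB1 : (TensorProduct.assoc k Q A P).toLinearMap ∘ₗ
      TensorProduct.map dQX.toLinearMap LinearMap.id ∘ₗ dB'.toLinearMap =
    TensorProduct.map LinearMap.id dPX.toLinearMap ∘ₗ dB'.toLinearMap
  coB2 : (TensorProduct.assoc k B Q P).toLinearMap ∘ₗ
      TensorProduct.map dQY.toLinearMap LinearMap.id ∘ₗ dB'.toLinearMap =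
    TensorProduct.map LinearMap.id dB'.toLinearMap ∘ₗ dB.toLinearMap
  coB3 : (TensorProduct.assoc k Q P B).toLinearMap ∘ₗ
      TensorProduct.map dB'.toLinearMap LinearMap.id ∘ₗ dB.toLinearMap =
    TensorProduct.map LinearMap.id dPY.toLinearMap ∘ₗ dB'.toLinearMap
  coB4 : (TensorProduct.assoc k B B B).toLinearMap ∘ₗ
      TensorProduct.map dB.toLinearMap LinearMap.id ∘ₗ dB.toLinearMap =
    TensorProduct.map LinearMap.id dB.toLinearMap ∘ₗ dB.toLinearMap
  -- counit laws
  cuA1 : (TensorProduct.rid k A).toLinearMap ∘ₗ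
      TensorProduct.map LinearMap.id eX.toLinearMap ∘ₗ dA.toLinearMap = LinearMap.id
  cuA2 : (TensorProduct.lid k A).toLinearMap ∘ₗ
      TensorProduct.map eX.toLinearMap LinearMap.id ∘ₗ dA.toLinearMap = LinearMap.id
  cuP1 : (TensorProduct.rid k P).toLinearMap ∘ₗ
      TensorProduct.map LinearMap.id eY.toLinearMap ∘ₗ dPY.toLinearMap = LinearMap.id
  cuP2 : (TensorProduct.lid k P).toLinearMap ∘ₗ
      TensorProduct.map eX.toLinearMap LinearMap.id ∘ₗ dPX.toLinearMap = LinearMap.id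
  cuQ1 : (TensorProduct.rid k Q).toLinearMap ∘ₗ
      TensorProduct.map LinearMap.id eX.toLinearMap ∘ₗ dQX.toLinearMap = LinearMap.id
  cuQ2 : (TensorProduct.lid k Q).toLinearMap ∘ₗ
      TensorProduct.map eY.toLinearMap LinearMap.id ∘ₗ dQY.toLinearMap = LinearMap.id
  cuB1 : (TensorProduct.rid k B).toLinearMap ∘ₗ
      TensorProduct.map LinearMap.id eY.toLinearMap ∘ₗ dB.toLinearMap = LinearMap.id
  cuB2 : (TensorProduct.lid k B).toLinearMap ∘ₗ
      TensorProduct.map eY.toLinearMap LinearMap.id ∘ₗ dB.toLinearMap = LinearMap.id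
  -- antipode laws
  antXX1 : LinearMap.mul' k A ∘ₗ TensorProduct.map (sA) LinearMap.id ∘ₗ dA.toLinearMap =
    Algebra.linearMap k A ∘ₗ eX.toLinearMap
  antXX2 : LinearMap.mul' k A ∘ₗ TensorProduct.map LinearMap.id (sA) ∘ₗ dA.toLinearMap =
    Algebra.linearMap k A ∘ₗ eX.toLinearMap
  antXY1 : LinearMap.mul' k P ∘ₗ TensorProduct.map LinearMap.id (sQ) ∘ₗ dA'.toLinearMap =
    Algebra.linearMap k P ∘ₗ eX.toLinearMap
  antXY2 : LinearMap.mul' k Q ∘ₗ TensorProduct.map (sP) LinearMap.id ∘ₗ dA'.toLinearMap =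
    Algebra.linearMap k Q ∘ₗ eX.toLinearMap
  antYX1 : LinearMap.mul' k Q ∘ₗ TensorProduct.map LinearMap.id (sP) ∘ₗ dB'.toLinearMap =
    Algebra.linearMap k Q ∘ₗ eY.toLinearMap
  antYX2 : LinearMap.mul' k P ∘ₗ TensorProduct.map (sQ) LinearMap.id ∘ₗ dB'.toLinearMap =
    Algebra.linearMap k P ∘ₗ eY.toLinearMap
  antYY1 : LinearMap.mul' k B ∘ₗ TensorProduct.map (sB) LinearMap.id ∘ₗ dB.toLinearMap =
    Algebra.linearMap k B ∘ₗ eY.toLinearMap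
  antYY2 : LinearMap.mul' k B ∘ₗ TensorProduct.map LinearMap.id (sB) ∘ₗ dB.toLinearMap =
    Algebra.linearMap k B ∘ₗ eY.toLinearMap

variable {k A B P Q}

/-- the left winding endomorphism `a ↦ f(a_1) a_2` of `A = C(X,X)` associated to a linear
functional `f` -/
def windAL (T : TwoCogroupoid k A B P Q) (f : A →ₗ[k] k) : A →ₗ[k] A :=
  (TensorProduct.lid k A).toLinearMap ∘ₗ
    TensorProduct.map f LinearMap.id ∘ₗ T.dA.toLinearMap

/-- the left winding endomorphism `[ξ]^l_{X,X} : a ↦ ξ(a_1) a_2` of `A = C(X,X)` -/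
def windA (T : TwoCogroupoid k A B P Q) (ξ : A →ₐ[k] k) : A →ₗ[k] A :=
  windAL T ξ.toLinearMap

/-- the left winding endomorphism `[ξ]^l_{X,Y} : a ↦ ξ(a_1^{X,X}) a_2^{X,Y}` of
`P = C(X,Y)` -/
def windP (T : TwoCogroupoid k A B P Q) (ξ : A →ₐ[k] k) : P →ₗ[k] P :=
  (TensorProduct.lid k P).toLinearMap ∘ₗ
    TensorProduct.map ξ.toLinearMap LinearMap.id ∘ₗ T.dPX.toLinearMap

/-!
For `Δ : C → C₁ ⊗ C₂` let `f ⋆ g = m ∘ (f ⊗ g) ∘ Δ`. Winding maps compose by convolution,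
`[g] ∘ [f] = [f ⋆ g]`, and `[ε] = id`; since an algebra map `ξ` has convolution inverse `ξ ∘ S`
on both sides, `[ξ ∘ S]` inverts `[ξ]`. The antipodes of a cogroupoid are anti-comultiplicative,
`Δ ∘ S = τ ∘ (S ⊗ S) ∘ Δ`, because `Δ ∘ S` is a left and `τ ∘ (S ⊗ S) ∘ Δ` a right convolution
inverse of `Δ`. Composing `ξ ⋆ ξS = ε` with `S` then gives `ξS² ⋆ ξS = ε`, so `ξS² = ξ`; and on
`C(X,Y)` it gives `Δ ∘ S² = (S² ⊗ S²) ∘ Δ`, so `S²` commutes with `[ξ]^l = [ξ ∘ S²]^l`.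
-/

section Convolution

variable {R : Type*} [CommSemiring R]
variable {C C₁ C₂ C₃ C₁₂ C₂₃ M N : Type*}
  [AddCommMonoid C] [Module R C] [AddCommMonoid C₁] [Module R C₁]
  [AddCommMonoid C₂] [Module R C₂] [AddCommMonoid C₃] [Module R C₃]
  [AddCommMonoid C₁₂] [Module R C₁₂] [AddCommMonoid C₂₃] [Module R C₂₃]
  [Semiring M] [Algebra R M] [Semiring N] [Algebra R N]

def comulConv (Δ : C →ₗ[R] C₁ ⊗[R] C₂) (f : C₁ →ₗ[R] M) (g : C₂ →ₗ[R] M) : C →ₗ[R] M :=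
  LinearMap.mul' R M ∘ₗ map f g ∘ₗ Δ

theorem map_comp_left {E F : Type*} [AddCommMonoid E] [Module R E] [AddCommMonoid F]
    [Module R F] (f : C₁₂ →ₗ[R] E) (Δ : C₁ →ₗ[R] C₁₂) (g : C₂ →ₗ[R] F) :
    map (f ∘ₗ Δ) g = map f g ∘ₗ map Δ LinearMap.id := by
  rw [← map_comp, LinearMap.comp_id]

theorem map_comp_right {E F : Type*} [AddCommMonoid E] [Module R E] [AddCommMonoid F]
    [Module R F] (f : C₁ →ₗ[R] E) (g : C₂₃ →ₗ[R] F) (Δ : C₂ →ₗ[R] C₂₃) :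
    map f (g ∘ₗ Δ) = map f g ∘ₗ map LinearMap.id Δ := by
  rw [← map_comp, LinearMap.comp_id]

theorem comulConv_assoc {Δ : C →ₗ[R] C₁₂ ⊗[R] C₃} {Δ₁₂ : C₁₂ →ₗ[R] C₁ ⊗[R] C₂}
    {Δ' : C →ₗ[R] C₁ ⊗[R] C₂₃} {Δ₂₃ : C₂₃ →ₗ[R] C₂ ⊗[R] C₃}
    (hΔ : (TensorProduct.assoc R C₁ C₂ C₃).toLinearMap ∘ₗ map Δ₁₂ LinearMap.id ∘ₗ Δ =
      map LinearMap.id Δ₂₃ ∘ₗ Δ')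
    (f : C₁ →ₗ[R] M) (g : C₂ →ₗ[R] M) (h : C₃ →ₗ[R] M) :
    comulConv Δ (comulConv Δ₁₂ f g) h = comulConv Δ' f (comulConv Δ₂₃ g h) := by
  have hmul : LinearMap.mul' R M ∘ₗ map (LinearMap.mul' R M ∘ₗ map f g) h =
      LinearMap.mul' R M ∘ₗ map f (LinearMap.mul' R M ∘ₗ map g h) ∘ₗ
        (TensorProduct.assoc R C₁ C₂ C₃).toLinearMap := by
    ext x y z; simp [mul_assoc]
  simp only [comulConv]
  rw [← LinearMap.comp_assoc Δ₁₂, ← LinearMap.comp_assoc Δ₂₃, map_comp_left, map_comp_right]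
  simp only [LinearMap.comp_assoc, ← hΔ]
  simp only [← LinearMap.comp_assoc, hmul]

theorem comulConv_counit_right {Δ : C₁ →ₗ[R] C₁ ⊗[R] C₂} {ε : C₂ →ₗ[R] R}
    (hε : (TensorProduct.rid R C₁).toLinearMap ∘ₗ map LinearMap.id ε ∘ₗ Δ = LinearMap.id)
    (f : C₁ →ₗ[R] M) :
    comulConv Δ f (Algebra.linearMap R M ∘ₗ ε) = f := by
  have hmul : LinearMap.mul' R M ∘ₗ map f (Algebra.linearMap R M ∘ₗ ε) =
      f ∘ₗ (TensorProduct.rid R C₁).toLinearMap ∘ₗ map LinearMap.id ε := by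
    ext x y; simp [Algebra.smul_def, Algebra.commutes]
  rw [comulConv, ← LinearMap.comp_assoc, hmul]
  simp only [LinearMap.comp_assoc, hε, LinearMap.comp_id]

theorem comulConv_counit_left {Δ : C₂ →ₗ[R] C₁ ⊗[R] C₂} {ε : C₁ →ₗ[R] R}
    (hε : (TensorProduct.lid R C₂).toLinearMap ∘ₗ map ε LinearMap.id ∘ₗ Δ = LinearMap.id)
    (g : C₂ →ₗ[R] M) :
    comulConv Δ (Algebra.linearMap R M ∘ₗ ε) g = g := by
  have hmul : LinearMap.mul' R M ∘ₗ map (Algebra.linearMap R M ∘ₗ ε) g =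
      g ∘ₗ (TensorProduct.lid R C₂).toLinearMap ∘ₗ map ε LinearMap.id := by
    ext x y; simp [Algebra.smul_def]
  rw [comulConv, ← LinearMap.comp_assoc, hmul]
  simp only [LinearMap.comp_assoc, hε, LinearMap.comp_id]

theorem algHom_comp_comulConv (F : M →ₐ[R] N) (Δ : C →ₗ[R] C₁ ⊗[R] C₂) (f : C₁ →ₗ[R] M)
    (g : C₂ →ₗ[R] M) :
    F.toLinearMap ∘ₗ comulConv Δ f g = comulConv Δ (F.toLinearMap ∘ₗ f) (F.toLinearMap ∘ₗ g) := by
  have hmul : F.toLinearMap ∘ₗ LinearMap.mul' R M =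
      LinearMap.mul' R N ∘ₗ map F.toLinearMap F.toLinearMap := by
    ext x y; simp
  simp only [comulConv, map_comp, ← LinearMap.comp_assoc, hmul]

theorem algHom_comp_linearMap (F : M →ₐ[R] N) :
    F.toLinearMap ∘ₗ Algebra.linearMap R M = Algebra.linearMap R N := by
  ext; simp

theorem comulConv_algHom_comp_eq_unit {Δ : C →ₗ[R] C₁ ⊗[R] C₂} {f : C₁ →ₗ[R] M}
    {g : C₂ →ₗ[R] M} {ε : C →ₗ[R] R} (h : comulConv Δ f g = Algebra.linearMap R M ∘ₗ ε)
    (F : M →ₐ[R] N) :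
    comulConv Δ (F.toLinearMap ∘ₗ f) (F.toLinearMap ∘ₗ g) = Algebra.linearMap R N ∘ₗ ε := by
  rw [← algHom_comp_comulConv, h, ← LinearMap.comp_assoc, algHom_comp_linearMap F]

theorem comulConv_comp_of_comul_comp {K D D₁ D₂ : Type*} [CommSemiring K] [Algebra R K]
    [AddCommMonoid D] [Module R D] [AddCommMonoid D₁] [Module R D₁]
    [AddCommMonoid D₂] [Module R D₂]
    {Δ : C →ₗ[R] C₁ ⊗[R] C₂} {Δ' : D →ₗ[R] D₁ ⊗[R] D₂} {S : C →ₗ[R] D}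
    {S₁ : C₁ →ₗ[R] D₂} {S₂ : C₂ →ₗ[R] D₁}
    (hS : Δ' ∘ₗ S = (TensorProduct.comm R D₂ D₁).toLinearMap ∘ₗ map S₁ S₂ ∘ₗ Δ)
    (f : D₁ →ₗ[R] K) (g : D₂ →ₗ[R] K) :
    comulConv Δ' f g ∘ₗ S = comulConv Δ (g ∘ₗ S₁) (f ∘ₗ S₂) := by
  have hmul : LinearMap.mul' R K ∘ₗ map f g ∘ₗ (TensorProduct.comm R D₂ D₁).toLinearMap =
      LinearMap.mul' R K ∘ₗ map g f := by
    ext x y; simp [mul_comm]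
  simp only [comulConv, LinearMap.comp_assoc, hS, map_comp]
  simp only [← LinearMap.comp_assoc, hmul]

theorem eq_of_comulConv_eq_unit {Cuu Cuv Cvu Cvv : Type*} [AddCommMonoid Cuu] [Module R Cuu]
    [AddCommMonoid Cuv] [Module R Cuv] [AddCommMonoid Cvu] [Module R Cvu]
    [AddCommMonoid Cvv] [Module R Cvv]
    {Δuuv : Cuv →ₗ[R] Cuu ⊗[R] Cuv} {Δuvv : Cuv →ₗ[R] Cuv ⊗[R] Cvv}
    {Δuvu : Cuu →ₗ[R] Cuv ⊗[R] Cvu} {Δvuv : Cvv →ₗ[R] Cvu ⊗[R] Cuv}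
    {εu : Cuu →ₗ[R] R} {εv : Cvv →ₗ[R] R}
    (hΔ : (TensorProduct.assoc R Cuv Cvu Cuv).toLinearMap ∘ₗ map Δuvu LinearMap.id ∘ₗ Δuuv =
      map LinearMap.id Δvuv ∘ₗ Δuvv)
    (hεu : (TensorProduct.lid R Cuv).toLinearMap ∘ₗ map εu LinearMap.id ∘ₗ Δuuv = LinearMap.id)
    (hεv : (TensorProduct.rid R Cuv).toLinearMap ∘ₗ map LinearMap.id εv ∘ₗ Δuvv = LinearMap.id)
    {f g : Cuv →ₗ[R] M} {d : Cvu →ₗ[R] M}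
    (hf : comulConv Δuvu f d = Algebra.linearMap R M ∘ₗ εu)
    (hg : comulConv Δvuv d g = Algebra.linearMap R M ∘ₗ εv) :
    f = g :=
  calc f = comulConv Δuvv f (Algebra.linearMap R M ∘ₗ εv) := (comulConv_counit_right hεv f).symm
    _ = comulConv Δuuv (comulConv Δuvu f d) g := by rw [← hg, comulConv_assoc hΔ]
    _ = g := by rw [hf, comulConv_counit_left hεu]

end Convolution

section Antipode

/- `Cxy` plays the role of `C(x,y)` for objects `u, v, z`; `Δxzy : Cxy → Cxz ⊗ Czy` is
`Δ^z_{x,y}`, `Sxy : Cxy → Cyx` is `S_{x,y}` and `εx` is `ε_x`. -/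
variable {R : Type*} [CommSemiring R]
variable {Cuu Cuv Cvv Cuz Czu Cvz Czv Czz : Type*}
  [AddCommMonoid Cuu] [Module R Cuu] [AddCommMonoid Cuv] [Module R Cuv]
  [AddCommMonoid Cvv] [Module R Cvv]
  [AddCommMonoid Cuz] [Module R Cuz] [Semiring Czu] [Algebra R Czu]
  [Semiring Cvz] [Algebra R Cvz] [AddCommMonoid Czv] [Module R Czv]
  [AddCommMonoid Czz] [Module R Czz]

theorem mul_antipode_tmul_comul_eq_one_tmul
    {Δzzv : Czv →ₗ[R] Czz ⊗[R] Czv} {Δzuz : Czz →ₗ[R] Czu ⊗[R] Cuz}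
    {Δzuv : Czv →ₗ[R] Czu ⊗[R] Cuv} {Δuzv : Cuv →ₗ[R] Cuz ⊗[R] Czv}
    {Suz : Cuz →ₗ[R] Czu} {εz : Czz →ₗ[R] R}
    (hΔ : (TensorProduct.assoc R Czu Cuz Czv).toLinearMap ∘ₗ map Δzuz LinearMap.id ∘ₗ Δzzv =
      map LinearMap.id Δuzv ∘ₗ Δzuv)
    (hS : LinearMap.mul' R Czu ∘ₗ map LinearMap.id Suz ∘ₗ Δzuz = Algebra.linearMap R Czu ∘ₗ εz)
    (hε : (TensorProduct.lid R Czv).toLinearMap ∘ₗ map εz LinearMap.id ∘ₗ Δzzv = LinearMap.id) :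
    map (LinearMap.mul' R Czu ∘ₗ map LinearMap.id Suz) LinearMap.id ∘ₗ
        (TensorProduct.assoc R Czu Cuz Czv).symm.toLinearMap ∘ₗ map LinearMap.id Δuzv ∘ₗ Δzuv =
      TensorProduct.mk R Czu Czv 1 := by
  have hΔ' : (TensorProduct.assoc R Czu Cuz Czv).symm.toLinearMap ∘ₗ
      map LinearMap.id Δuzv ∘ₗ Δzuv = map Δzuz LinearMap.id ∘ₗ Δzzv :=
    (LinearEquiv.toLinearMap_symm_comp_eq _ _).2 hΔ.symm
  have hunit : map (Algebra.linearMap R Czu ∘ₗ εz) (LinearMap.id : Czv →ₗ[R] Czv) =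
      TensorProduct.mk R Czu Czv 1 ∘ₗ (TensorProduct.lid R Czv).toLinearMap ∘ₗ
        map εz LinearMap.id := by
    ext x y; simp [Algebra.algebraMap_eq_smul_one, TensorProduct.smul_tmul]
  rw [hΔ', ← LinearMap.comp_assoc, ← map_comp_left, LinearMap.comp_assoc, hS, hunit]
  simp only [LinearMap.comp_assoc, hε, LinearMap.comp_id]

theorem comulConv_comul_comm_map_antipode_eq_unit {Cvu : Type*} [AddCommMonoid Cvu]
    [Module R Cvu]
    {Δvzu : Cvu →ₗ[R] Cvz ⊗[R] Czu} {Δvuv : Cvv →ₗ[R] Cvu ⊗[R] Cuv}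
    {Δvzv : Cvv →ₗ[R] Cvz ⊗[R] Czv} {Δzuv : Czv →ₗ[R] Czu ⊗[R] Cuv}
    {Δzzv : Czv →ₗ[R] Czz ⊗[R] Czv} {Δzuz : Czz →ₗ[R] Czu ⊗[R] Cuz}
    {Δuzv : Cuv →ₗ[R] Cuz ⊗[R] Czv}
    {Suz : Cuz →ₗ[R] Czu} {Szv : Czv →ₗ[R] Cvz} {εz : Czz →ₗ[R] R} {εv : Cvv →ₗ[R] R}
    (hΔv : (TensorProduct.assoc R Cvz Czu Cuv).toLinearMap ∘ₗ map Δvzu LinearMap.id ∘ₗ Δvuv =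
      map LinearMap.id Δzuv ∘ₗ Δvzv)
    (hΔz : (TensorProduct.assoc R Czu Cuz Czv).toLinearMap ∘ₗ map Δzuz LinearMap.id ∘ₗ Δzzv =
      map LinearMap.id Δuzv ∘ₗ Δzuv)
    (hSuz : LinearMap.mul' R Czu ∘ₗ map LinearMap.id Suz ∘ₗ Δzuz = Algebra.linearMap R Czu ∘ₗ εz)
    (hεz : (TensorProduct.lid R Czv).toLinearMap ∘ₗ map εz LinearMap.id ∘ₗ Δzzv = LinearMap.id)
    (hSzv : LinearMap.mul' R Cvz ∘ₗ map LinearMap.id Szv ∘ₗ Δvzv = Algebra.linearMap R Cvz ∘ₗ εv) :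
    comulConv Δvuv Δvzu ((TensorProduct.comm R Czu Cvz).toLinearMap ∘ₗ map Suz Szv ∘ₗ Δuzv) =
      Algebra.linearMap R (Cvz ⊗[R] Czu) ∘ₗ εv := by
  -- In Sweedler notation the left side is `a₁ S(a₄) ⊗ a₂ S(a₃)`; `Θ` contracts `a₂ S(a₃)` to `1`,
  -- leaving `a₁ S(a₂) ⊗ 1 = ε(a) 1`.
  set g := (TensorProduct.comm R Czu Cvz).toLinearMap ∘ₗ map Suz Szv ∘ₗ Δuzv
  set Θ := map (LinearMap.mul' R Czu ∘ₗ map LinearMap.id Suz) LinearMap.id ∘ₗ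
    (TensorProduct.assoc R Czu Cuz Czv).symm.toLinearMap ∘ₗ map LinearMap.id Δuzv
  set Ψ := (TensorProduct.comm R Czu Cvz).toLinearMap ∘ₗ
    map LinearMap.id (LinearMap.mul' R Cvz ∘ₗ map LinearMap.id Szv) ∘ₗ
    (TensorProduct.leftComm R Cvz Czu Czv).toLinearMap
  have hΘ : LinearMap.mul' R (Cvz ⊗[R] Czu) ∘ₗ map LinearMap.id g ∘ₗ
      (TensorProduct.assoc R Cvz Czu Cuv).symm.toLinearMap = Ψ ∘ₗ map LinearMap.id Θ := by
    ext v y w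
    simp only [g, Θ, Ψ, AlgebraTensorModule.curry_apply, LinearMap.restrictScalars_self,
      curry_apply, LinearMap.coe_comp, LinearEquiv.coe_coe, Function.comp_apply, assoc_symm_tmul,
      map_tmul, LinearMap.id_coe, id_eq, LinearMap.mul'_apply]
    generalize Δuzv w = t
    induction t using TensorProduct.induction_on with
    | zero => simp
    | tmul a b => simp [Algebra.TensorProduct.tmul_mul_tmul]
    | add s t hs ht => simp_all [tmul_add, mul_add]
  have hΨ : Ψ ∘ₗ map LinearMap.id (TensorProduct.mk R Czu Czv 1) =
      (Algebra.TensorProduct.includeLeft : Cvz →ₐ[R] Cvz ⊗[R] Czu).toLinearMap ∘ₗ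
        LinearMap.mul' R Cvz ∘ₗ map LinearMap.id Szv := by
    ext v w; simp [Ψ]
  have habsorb : Θ ∘ₗ Δzuv = TensorProduct.mk R Czu Czv 1 :=
    mul_antipode_tmul_comul_eq_one_tmul hΔz hSuz hεz
  clear_value g Θ Ψ
  calc comulConv Δvuv Δvzu g
      = LinearMap.mul' R (Cvz ⊗[R] Czu) ∘ₗ (map LinearMap.id g ∘ₗ map Δvzu LinearMap.id) ∘ₗ
          Δvuv := by
        rw [comulConv, ← map_comp, LinearMap.id_comp, LinearMap.comp_id]
    _ = Ψ ∘ₗ map LinearMap.id Θ ∘ₗ map LinearMap.id Δzuv ∘ₗ Δvzv := by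
        rw [LinearMap.comp_assoc, ← (LinearEquiv.toLinearMap_symm_comp_eq _ _).2 hΔv.symm]
        simp only [← LinearMap.comp_assoc] at hΘ ⊢
        rw [hΘ]
    _ = Algebra.linearMap R (Cvz ⊗[R] Czu) ∘ₗ εv := by
        rw [← LinearMap.comp_assoc Δvzv, ← map_comp_right, habsorb,
          ← LinearMap.comp_assoc, hΨ]
        simp only [LinearMap.comp_assoc, hSzv]
        rw [← LinearMap.comp_assoc, algHom_comp_linearMap]

theorem comul_comp_antipode {Cvu : Type*} [Semiring Cvu] [Algebra R Cvu]
    {Δuuv : Cuv →ₗ[R] Cuu ⊗[R] Cuv} {Δuvv : Cuv →ₗ[R] Cuv ⊗[R] Cvv}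
    {Δuvu : Cuu →ₗ[R] Cuv ⊗[R] Cvu} {Δvuv : Cvv →ₗ[R] Cvu ⊗[R] Cuv}
    {Δvzu : Cvu →ₐ[R] Cvz ⊗[R] Czu} {Δvzv : Cvv →ₗ[R] Cvz ⊗[R] Czv}
    {Δzuv : Czv →ₗ[R] Czu ⊗[R] Cuv} {Δzzv : Czv →ₗ[R] Czz ⊗[R] Czv}
    {Δzuz : Czz →ₗ[R] Czu ⊗[R] Cuz} {Δuzv : Cuv →ₗ[R] Cuz ⊗[R] Czv}
    {Suv : Cuv →ₗ[R] Cvu} {Suz : Cuz →ₗ[R] Czu} {Szv : Czv →ₗ[R] Cvz}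
    {εu : Cuu →ₗ[R] R} {εv : Cvv →ₗ[R] R} {εz : Czz →ₗ[R] R}
    (hΔu : (TensorProduct.assoc R Cuv Cvu Cuv).toLinearMap ∘ₗ map Δuvu LinearMap.id ∘ₗ Δuuv =
      map LinearMap.id Δvuv ∘ₗ Δuvv)
    (hεu : (TensorProduct.lid R Cuv).toLinearMap ∘ₗ map εu LinearMap.id ∘ₗ Δuuv = LinearMap.id)
    (hεv : (TensorProduct.rid R Cuv).toLinearMap ∘ₗ map LinearMap.id εv ∘ₗ Δuvv = LinearMap.id)
    (hSuv : LinearMap.mul' R Cvu ∘ₗ map Suv LinearMap.id ∘ₗ Δuvu = Algebra.linearMap R Cvu ∘ₗ εu)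
    (hΔv : (TensorProduct.assoc R Cvz Czu Cuv).toLinearMap ∘ₗ
      map Δvzu.toLinearMap LinearMap.id ∘ₗ Δvuv = map LinearMap.id Δzuv ∘ₗ Δvzv)
    (hΔz : (TensorProduct.assoc R Czu Cuz Czv).toLinearMap ∘ₗ map Δzuz LinearMap.id ∘ₗ Δzzv =
      map LinearMap.id Δuzv ∘ₗ Δzuv)
    (hSuz : LinearMap.mul' R Czu ∘ₗ map LinearMap.id Suz ∘ₗ Δzuz = Algebra.linearMap R Czu ∘ₗ εz)
    (hεz : (TensorProduct.lid R Czv).toLinearMap ∘ₗ map εz LinearMap.id ∘ₗ Δzzv = LinearMap.id)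
    (hSzv : LinearMap.mul' R Cvz ∘ₗ map LinearMap.id Szv ∘ₗ Δvzv = Algebra.linearMap R Cvz ∘ₗ εv) :
    Δvzu.toLinearMap ∘ₗ Suv =
      (TensorProduct.comm R Czu Cvz).toLinearMap ∘ₗ map Suz Szv ∘ₗ Δuzv := by
  refine eq_of_comulConv_eq_unit hΔu hεu hεv (d := Δvzu.toLinearMap) ?_
    (comulConv_comul_comm_map_antipode_eq_unit hΔv hΔz hSuz hεz hSzv)
  simpa only [LinearMap.comp_id] using comulConv_algHom_comp_eq_unit hSuv Δvzu

end Antipode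

section Winding

variable {R : Type*} [CommSemiring R]
variable {C C₁ C₂ C₃ C₁₂ C₂₃ D D₁ D₂ : Type*}
  [AddCommMonoid C] [Module R C] [AddCommMonoid C₁] [Module R C₁]
  [AddCommMonoid C₂] [Module R C₂] [AddCommMonoid C₃] [Module R C₃]
  [AddCommMonoid C₁₂] [Module R C₁₂] [AddCommMonoid C₂₃] [Module R C₂₃]
  [AddCommMonoid D] [Module R D] [AddCommMonoid D₁] [Module R D₁]
  [AddCommMonoid D₂] [Module R D₂]

def windingMap (Δ : C →ₗ[R] C₁ ⊗[R] C₂) (f : C₁ →ₗ[R] R) : C →ₗ[R] C₂ :=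
  (TensorProduct.lid R C₂).toLinearMap ∘ₗ map f LinearMap.id ∘ₗ Δ

theorem windingMap_comp_windingMap {Δ : C →ₗ[R] C₁₂ ⊗[R] C₃} {Δ₁₂ : C₁₂ →ₗ[R] C₁ ⊗[R] C₂}
    {Δ' : C →ₗ[R] C₁ ⊗[R] C₂₃} {Δ₂₃ : C₂₃ →ₗ[R] C₂ ⊗[R] C₃}
    (hΔ : (TensorProduct.assoc R C₁ C₂ C₃).toLinearMap ∘ₗ map Δ₁₂ LinearMap.id ∘ₗ Δ =
      map LinearMap.id Δ₂₃ ∘ₗ Δ')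
    (f : C₁ →ₗ[R] R) (g : C₂ →ₗ[R] R) :
    windingMap Δ₂₃ g ∘ₗ windingMap Δ' f = windingMap Δ (comulConv Δ₁₂ f g) := by
  have hnat : Δ₂₃ ∘ₗ (TensorProduct.lid R C₂₃).toLinearMap ∘ₗ map f LinearMap.id =
      (TensorProduct.lid R (C₂ ⊗[R] C₃)).toLinearMap ∘ₗ map f LinearMap.id ∘ₗ
        map LinearMap.id Δ₂₃ := by
    ext x y; simp
  have hmul : ((TensorProduct.lid R C₃).toLinearMap ∘ₗ map g LinearMap.id) ∘ₗ
      ((TensorProduct.lid R (C₂ ⊗[R] C₃)).toLinearMap ∘ₗ map f LinearMap.id) ∘ₗ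
        (TensorProduct.assoc R C₁ C₂ C₃).toLinearMap =
      (TensorProduct.lid R C₃).toLinearMap ∘ₗ map (LinearMap.mul' R R ∘ₗ map f g) LinearMap.id := by
    ext x y z; simp [smul_smul]
  calc windingMap Δ₂₃ g ∘ₗ windingMap Δ' f
      = ((TensorProduct.lid R C₃).toLinearMap ∘ₗ map g LinearMap.id) ∘ₗ
          (Δ₂₃ ∘ₗ (TensorProduct.lid R C₂₃).toLinearMap ∘ₗ map f LinearMap.id) ∘ₗ Δ' := rfl
    _ = (((TensorProduct.lid R C₃).toLinearMap ∘ₗ map g LinearMap.id) ∘ₗ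
          ((TensorProduct.lid R (C₂ ⊗[R] C₃)).toLinearMap ∘ₗ map f LinearMap.id)) ∘ₗ
          map LinearMap.id Δ₂₃ ∘ₗ Δ' := by rw [hnat]; rfl
    _ = ((TensorProduct.lid R C₃).toLinearMap ∘ₗ
          map (LinearMap.mul' R R ∘ₗ map f g) LinearMap.id) ∘ₗ map Δ₁₂ LinearMap.id ∘ₗ Δ := by
        rw [← hΔ, ← hmul]; rfl
    _ = windingMap Δ (comulConv Δ₁₂ f g) := by
        rw [windingMap, comulConv, ← LinearMap.comp_assoc Δ₁₂, map_comp_left _ Δ₁₂]; rfl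

theorem windingMap_comp_of_comul_comp {Δ : C →ₗ[R] C₁ ⊗[R] C₂} {Δ' : D →ₗ[R] D₁ ⊗[R] D₂}
    {θ : D →ₗ[R] C} {α : D₁ →ₗ[R] C₁} {θ' : D₂ →ₗ[R] C₂}
    (hθ : Δ ∘ₗ θ = map α θ' ∘ₗ Δ') (f : C₁ →ₗ[R] R) :
    windingMap Δ f ∘ₗ θ = θ' ∘ₗ windingMap Δ' (f ∘ₗ α) := by
  have hnat : (TensorProduct.lid R C₂).toLinearMap ∘ₗ map f LinearMap.id ∘ₗ map α θ' =
      θ' ∘ₗ (TensorProduct.lid R D₂).toLinearMap ∘ₗ map (f ∘ₗ α) LinearMap.id := by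
    ext x y; simp
  simp only [windingMap, LinearMap.comp_assoc, hθ]
  simp only [← LinearMap.comp_assoc] at hnat ⊢
  rw [hnat]

end Winding

section WindingAlgHom

variable {R : Type*} [CommSemiring R] {C C₁ C₂ : Type*} [Semiring C] [Algebra R C]
  [Semiring C₁] [Algebra R C₁] [Semiring C₂] [Algebra R C₂]

def windingAlgHom (Δ : C →ₐ[R] C₁ ⊗[R] C₂) (φ : C₁ →ₐ[R] R) : C →ₐ[R] C₂ :=
  (Algebra.TensorProduct.lid R C₂).toAlgHom.comp
    ((Algebra.TensorProduct.map φ (AlgHom.id R C₂)).comp Δ)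

theorem windingAlgHom_toLinearMap (Δ : C →ₐ[R] C₁ ⊗[R] C₂) (φ : C₁ →ₐ[R] R) :
    (windingAlgHom Δ φ).toLinearMap = windingMap Δ.toLinearMap φ.toLinearMap := by
  have : (Algebra.TensorProduct.lid R C₂).toLinearMap ∘ₗ
      (Algebra.TensorProduct.map φ (AlgHom.id R C₂)).toLinearMap =
      (TensorProduct.lid R C₂).toLinearMap ∘ₗ map φ.toLinearMap LinearMap.id := by
    ext x y; simp
  rw [windingMap, ← LinearMap.comp_assoc, ← this]
  rfl

end WindingAlgHom

namespace TwoCogroupoid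

variable (T : TwoCogroupoid k A B P Q)

theorem dA_comp_sA : T.dA.toLinearMap ∘ₗ T.sA =
    (TensorProduct.comm k A A).toLinearMap ∘ₗ map T.sA T.sA ∘ₗ T.dA.toLinearMap :=
  comul_comp_antipode T.coA1 T.cuA2 T.cuA1 T.antXX1 T.coA1 T.coA1 T.antXX2 T.cuA2 T.antXX2

theorem dQX_comp_sP : T.dQX.toLinearMap ∘ₗ T.sP =
    (TensorProduct.comm k A Q).toLinearMap ∘ₗ map T.sA T.sP ∘ₗ T.dPX.toLinearMap :=
  comul_comp_antipode T.coP2 T.cuP2 T.cuP1 T.antXY2 T.coB1 T.coP1 T.antXX2 T.cuP2 T.antYX1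

theorem dPX_comp_sQ : T.dPX.toLinearMap ∘ₗ T.sQ =
    (TensorProduct.comm k P A).toLinearMap ∘ₗ map T.sQ T.sA ∘ₗ T.dQX.toLinearMap :=
  comul_comp_antipode T.coQ3 T.cuQ2 T.cuQ1 T.antYX2 T.coA3 T.coA2 T.antXY1 T.cuA2 T.antXX2

theorem dPX_comp_sQ_comp_sP : T.dPX.toLinearMap ∘ₗ T.sQ ∘ₗ T.sP =
    map (T.sA ∘ₗ T.sA) (T.sQ ∘ₗ T.sP) ∘ₗ T.dPX.toLinearMap := by
  have hswap : (TensorProduct.comm k P A).toLinearMap ∘ₗ map T.sQ T.sA ∘ₗ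
      (TensorProduct.comm k A Q).toLinearMap ∘ₗ map T.sA T.sP =
      map (T.sA ∘ₗ T.sA) (T.sQ ∘ₗ T.sP) := by
    ext x y; simp
  rw [← LinearMap.comp_assoc, dPX_comp_sQ]
  simp only [LinearMap.comp_assoc, dQX_comp_sP]
  simp only [← LinearMap.comp_assoc] at hswap ⊢
  rw [hswap]

variable {M : Type*} [Semiring M] [Algebra k M]

theorem comulConv_comp_sA_self (φ : A →ₐ[k] M) :
    comulConv T.dA.toLinearMap (φ.toLinearMap ∘ₗ T.sA) φ.toLinearMap =
      Algebra.linearMap k M ∘ₗ T.eX.toLinearMap := by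
  simpa only [LinearMap.comp_id] using comulConv_algHom_comp_eq_unit T.antXX1 φ

theorem comulConv_self_comp_sA (φ : A →ₐ[k] M) :
    comulConv T.dA.toLinearMap φ.toLinearMap (φ.toLinearMap ∘ₗ T.sA) =
      Algebra.linearMap k M ∘ₗ T.eX.toLinearMap := by
  simpa only [LinearMap.comp_id] using comulConv_algHom_comp_eq_unit T.antXX2 φ

theorem eX_comp_sA : T.eX.toLinearMap ∘ₗ T.sA = T.eX.toLinearMap :=
  eq_of_comulConv_eq_unit T.coA1 T.cuA2 T.cuA1 (T.comulConv_comp_sA_self T.eX)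
    (by simpa only [Algebra.linearMap_self, LinearMap.id_comp] using
      comulConv_counit_right T.cuA1 T.eX.toLinearMap)

theorem comp_sA_comp_sA (ξ : A →ₐ[k] k) : ξ.toLinearMap ∘ₗ T.sA ∘ₗ T.sA = ξ.toLinearMap := by
  refine eq_of_comulConv_eq_unit T.coA1 T.cuA2 T.cuA1 ?_ (T.comulConv_comp_sA_self ξ)
  calc comulConv T.dA.toLinearMap (ξ.toLinearMap ∘ₗ T.sA ∘ₗ T.sA) (ξ.toLinearMap ∘ₗ T.sA)
      = comulConv T.dA.toLinearMap ξ.toLinearMap (ξ.toLinearMap ∘ₗ T.sA) ∘ₗ T.sA := by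
        rw [comulConv_comp_of_comul_comp T.dA_comp_sA, LinearMap.comp_assoc]
    _ = Algebra.linearMap k k ∘ₗ T.eX.toLinearMap := by
        rw [comulConv_self_comp_sA, LinearMap.comp_assoc, eX_comp_sA]

end TwoCogroupoid

/-- For any algebra homomorphism `ξ : C(X,X) → k`:
(i) `[ξ]^l_{X,X}` is an algebra automorphism with inverse `[ξ∘S_{X,X}]^l`;
(ii) `ξ∘S²_{X,X} = ξ`, so `[ξ]^l_{X,X} = [ξ∘S²_{X,X}]^l_{X,X}`;
(iii) on `C(X,Y)`, `[ξ]^l_{X,Y} ∘ S_{Y,X} ∘ S_{X,Y} = S_{Y,X} ∘ S_{X,Y} ∘ [ξ]^l_{X,Y}`. -/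
theorem stmt13 (T : TwoCogroupoid k A B P Q) (ξ : A →ₐ[k] k) :
    (∀ a b : A, windA T ξ (a * b) = windA T ξ a * windA T ξ b) ∧
    windA T ξ 1 = 1 ∧
    (windAL T (ξ.toLinearMap ∘ₗ T.sA) ∘ₗ windA T ξ = LinearMap.id ∧
      windA T ξ ∘ₗ windAL T (ξ.toLinearMap ∘ₗ T.sA) = LinearMap.id) ∧
    (ξ.toLinearMap ∘ₗ T.sA ∘ₗ T.sA = ξ.toLinearMap) ∧
    (windA T ξ = windAL T (ξ.toLinearMap ∘ₗ T.sA ∘ₗ T.sA)) ∧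
    (windP T ξ ∘ₗ (T.sQ ∘ₗ T.sP) = (T.sQ ∘ₗ T.sP) ∘ₗ windP T ξ) := by
  have hS2 := T.comp_sA_comp_sA ξ
  have hwind (f g : A →ₗ[k] k) :
      windAL T g ∘ₗ windAL T f = windAL T (comulConv T.dA.toLinearMap f g) :=
    windingMap_comp_windingMap T.coA1 f g
  have hcounit : windAL T (Algebra.linearMap k k ∘ₗ T.eX.toLinearMap) = LinearMap.id := T.cuA2
  have halg : windA T ξ = (windingAlgHom T.dA ξ).toLinearMap :=
    (windingAlgHom_toLinearMap T.dA ξ).symm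
  refine ⟨fun a b => ?_, ?_, ⟨?_, ?_⟩, hS2, by rw [hS2]; rfl, ?_⟩
  · simp only [halg, AlgHom.toLinearMap_apply, map_mul]
  · simp only [halg, AlgHom.toLinearMap_apply, map_one]
  · rw [windA, hwind, T.comulConv_self_comp_sA, hcounit]
  · rw [windA, hwind, T.comulConv_comp_sA_self, hcounit]
  · have h := windingMap_comp_of_comul_comp T.dPX_comp_sQ_comp_sP ξ.toLinearMap
    rwa [hS2] at h

end

end Stmt13
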